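/- There exists a universal constant C > 0 such that for all λ > 0 and all ε ∈ (0,1) with λ·ε² ≤ 1: D(M‖P) ≤ C·λ²·ε⁴, where P is the Poisson(λ) distribution on ℕ, M is the mixture distribution on ℕ given by M(ℓ) = (1/2)·(e^{−λ(1+ε)}·(λ(1+ε))^ℓ + e^{−λ(1−ε)}·(λ(1−ε))^ℓ)/ℓ!, and D(M‖P) = ∑_{ℓ∈ℕ} M(ℓ)·log(M(ℓ)/P(ℓ)) is the Kullback–Leibler divergence. -/

import Mathlib

/-- The mass function of the Poisson distribution with rate `lam`:
`P(ℓ) = exp(−lam)·lam^ℓ/ℓ!`. -/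
noncomputable def poissonMass (lam : ℝ) (ℓ : ℕ) : ℝ :=
  Real.exp (-lam) * lam ^ ℓ / (Nat.factorial ℓ)

/-- The equal-weight mixture of `Poisson(lam·(1+ε))` and `Poisson(lam·(1−ε))`. -/
noncomputable def mixMass (lam ε : ℝ) (ℓ : ℕ) : ℝ :=
  (poissonMass (lam * (1 + ε)) ℓ + poissonMass (lam * (1 - ε)) ℓ) / 2

/-!
Kullback–Leibler divergence is dominated by the χ² divergence, termwise by `log x ≤ x - 1`:
`p log (p / q) ≤ p ^ 2 / q - p`. For Poisson masses the χ² sums are explicit,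
`∑ P_a P_b / P_c = exp ((c - a) (c - b) / c)`, which for the symmetric mixture gives
`∑ M ^ 2 / P = cosh (λ ε ^ 2)`; and `cosh t - 1 ≤ t ^ 2` for `|t| ≤ 1`.
-/

open Real Nat

lemma sub_le_mul_log_div {p q : ℝ} (hp : 0 ≤ p) (hq : 0 < q) : p - q ≤ p * log (p / q) := by
  rcases hp.eq_or_lt with rfl | hp
  · simpa using hq.le
  have := one_sub_inv_le_log_of_pos (div_pos hp hq)
  rw [inv_div] at this
  calc p - q = p * (1 - q / p) := by field_simp
    _ ≤ p * log (p / q) := by gcongr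

lemma mul_log_div_le {p q : ℝ} (hp : 0 ≤ p) (hq : 0 < q) : p * log (p / q) ≤ p ^ 2 / q - p := by
  rcases hp.eq_or_lt with rfl | hp
  · simp
  calc p * log (p / q) ≤ p * (p / q - 1) := by gcongr; exact log_le_sub_one_of_pos (by positivity)
    _ = p ^ 2 / q - p := by ring

theorem tsum_mul_log_div_le {α : Type*} {p q : α → ℝ} (hp : ∀ x, 0 ≤ p x) (hq : ∀ x, 0 < q x)
    (hps : Summable p) (hqs : Summable q) (hχ : Summable fun x ↦ p x ^ 2 / q x) :
    ∑' x, p x * log (p x / q x) ≤ ∑' x, p x ^ 2 / q x - ∑' x, p x := by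
  have hlower : Summable fun x ↦ p x - q x := hps.sub hqs
  have hupper : Summable fun x ↦ p x ^ 2 / q x - p x := hχ.sub hps
  -- The terms are squeezed between `p - q` and `p ^ 2 / q - p`, hence summable.
  have hkl : Summable fun x ↦ p x * log (p x / q x) := by
    have := (hupper.sub hlower).of_nonneg_of_le
      (fun x ↦ sub_nonneg.mpr (sub_le_mul_log_div (hp x) (hq x)))
      (fun x ↦ sub_le_sub_right (mul_log_div_le (hp x) (hq x)) _)
    simpa using this.add hlower
  rw [← hχ.tsum_sub hps]
  exact hkl.tsum_le_tsum (fun x ↦ mul_log_div_le (hp x) (hq x)) hupper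

lemma cosh_sub_one_le_sq {t : ℝ} (ht : |t| ≤ 1) : cosh t - 1 ≤ t ^ 2 := by
  have h_pos := (abs_le.mp (abs_exp_sub_one_sub_id_le ht)).2
  have h_neg := (abs_le.mp (abs_exp_sub_one_sub_id_le (x := -t) (by rwa [abs_neg]))).2
  rw [cosh_eq]
  linarith [neg_sq t]

lemma poissonMass_eq_exp_mul (lam : ℝ) :
    poissonMass lam = fun ℓ ↦ exp (-lam) * (lam ^ ℓ / ℓ !) := by
  funext ℓ
  rw [poissonMass, mul_div_assoc]

lemma hasSum_poissonMass (lam : ℝ) : HasSum (poissonMass lam) 1 := by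
  have := (NormedSpace.expSeries_div_hasSum_exp lam).mul_left (exp (-lam))
  rwa [← exp_eq_exp_ℝ, ← exp_add, neg_add_cancel, exp_zero, ← poissonMass_eq_exp_mul] at this

lemma poissonMass_pos {lam : ℝ} (hlam : 0 < lam) (ℓ : ℕ) : 0 < poissonMass lam ℓ := by
  unfold poissonMass
  positivity

lemma poissonMass_mul_div (a b : ℝ) {c : ℝ} (hc : c ≠ 0) (ℓ : ℕ) :
    poissonMass a ℓ * poissonMass b ℓ / poissonMass c ℓ =
      exp (c - a - b) * ((a * b / c) ^ ℓ / ℓ !) := by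
  have hexp : exp (c - a - b) = exp (-a) * exp (-b) / exp (-c) := by
    rw [← exp_add, ← exp_sub]
    ring_nf
  rw [poissonMass, poissonMass, poissonMass, hexp, div_pow, mul_pow]
  field_simp

lemma hasSum_poissonMass_mul_div (a b : ℝ) {c : ℝ} (hc : c ≠ 0) :
    HasSum (fun ℓ ↦ poissonMass a ℓ * poissonMass b ℓ / poissonMass c ℓ)
      (exp ((c - a) * (c - b) / c)) := by
  have := (NormedSpace.expSeries_div_hasSum_exp (a * b / c)).mul_left (exp (c - a - b))
  rw [← exp_eq_exp_ℝ, ← exp_add] at this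
  have hexponent : c - a - b + a * b / c = (c - a) * (c - b) / c := by
    field_simp
    ring
  simpa only [poissonMass_mul_div a b hc, hexponent] using this

lemma mixMass_nonneg {lam ε : ℝ} (hlam : 0 ≤ lam) (hε : |ε| ≤ 1) (ℓ : ℕ) :
    0 ≤ mixMass lam ε ℓ := by
  obtain ⟨hε_lower, hε_upper⟩ := abs_le.mp hε
  have h_plus : 0 ≤ lam * (1 + ε) := mul_nonneg hlam (by linarith)
  have h_minus : 0 ≤ lam * (1 - ε) := mul_nonneg hlam (by linarith)
  unfold mixMass poissonMass
  positivity

lemma hasSum_mixMass (lam ε : ℝ) : HasSum (mixMass lam ε) 1 := by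
  have := ((hasSum_poissonMass (lam * (1 + ε))).add (hasSum_poissonMass (lam * (1 - ε)))).div_const 2
  rwa [one_add_one_eq_two, div_self two_ne_zero] at this

lemma hasSum_mixMass_sq_div_poissonMass {lam : ℝ} (hlam : lam ≠ 0) (ε : ℝ) :
    HasSum (fun ℓ ↦ mixMass lam ε ℓ ^ 2 / poissonMass lam ℓ) (cosh (lam * ε ^ 2)) := by
  set a := lam * (1 + ε)
  set b := lam * (1 - ε)
  have := (((hasSum_poissonMass_mul_div a a hlam).add
    ((hasSum_poissonMass_mul_div a b hlam).mul_left 2)).add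
    (hasSum_poissonMass_mul_div b b hlam)).div_const 4
  have haa : (lam - a) * (lam - a) / lam = lam * ε ^ 2 := by field_simp; ring
  have hab : (lam - a) * (lam - b) / lam = -(lam * ε ^ 2) := by field_simp; ring
  have hbb : (lam - b) * (lam - b) / lam = lam * ε ^ 2 := by field_simp; ring
  have hvalue : (exp (lam * ε ^ 2) + 2 * exp (-(lam * ε ^ 2)) + exp (lam * ε ^ 2)) / 4 =
      cosh (lam * ε ^ 2) := by
    rw [cosh_eq]
    ring
  rw [haa, hab, hbb, hvalue] at this
  have hterm (ℓ : ℕ) : mixMass lam ε ℓ ^ 2 / poissonMass lam ℓ =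
      (poissonMass a ℓ * poissonMass a ℓ / poissonMass lam ℓ +
        2 * (poissonMass a ℓ * poissonMass b ℓ / poissonMass lam ℓ) +
        poissonMass b ℓ * poissonMass b ℓ / poissonMass lam ℓ) / 4 := by
    rw [mixMass]
    ring
  simpa only [hterm] using this

/-- KL divergence between the symmetric Poisson mixture `M` and `Poisson(lam)` is
`O(lam²·ε⁴)` whenever `lam·ε² ≤ 1`. -/
theorem kl_poisson_mixture_le :
    ∃ C > (0 : ℝ), ∀ lam ε : ℝ, 0 < lam → 0 < ε → ε < 1 → lam * ε ^ 2 ≤ 1 →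
      ∑' ℓ : ℕ, mixMass lam ε ℓ * Real.log (mixMass lam ε ℓ / poissonMass lam ℓ) ≤
        C * lam ^ 2 * ε ^ 4 := by
  refine ⟨1, one_pos, fun lam ε hlam hε hε_lt hχ => ?_⟩
  have hχ_abs : |lam * ε ^ 2| ≤ 1 := by rwa [abs_of_pos (by positivity)]
  have hε_abs : |ε| ≤ 1 := by rw [abs_of_pos hε]; exact hε_lt.le
  have hM := hasSum_mixMass lam ε
  have hχsum := hasSum_mixMass_sq_div_poissonMass hlam.ne' ε
  calc ∑' ℓ, mixMass lam ε ℓ * log (mixMass lam ε ℓ / poissonMass lam ℓ)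
      ≤ ∑' ℓ, mixMass lam ε ℓ ^ 2 / poissonMass lam ℓ - ∑' ℓ, mixMass lam ε ℓ :=
        tsum_mul_log_div_le (mixMass_nonneg hlam.le hε_abs) (poissonMass_pos hlam)
          hM.summable (hasSum_poissonMass lam).summable hχsum.summable
    _ = cosh (lam * ε ^ 2) - 1 := by rw [hχsum.tsum_eq, hM.tsum_eq]
    _ ≤ (lam * ε ^ 2) ^ 2 := cosh_sub_one_le_sq hχ_abs
    _ = 1 * lam ^ 2 * ε ^ 4 := by ring
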